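/- arXiv:1601.05615 — 2 statements merged into one kernel-verified Lean document; each statement's English description precedes it below -/
import Mathlib

section
/- Let R = k[[X, Y]] be a formal power series ring over a field, I = (X, Y²), J = (X², Y). Then {X, Y} is a joint reduction of (I, J) of type (1,1) with joint reduction number zero: X I^r J^{s+1} + Y I^{r+1} J^s = I^{r+1} J^{s+1} for all r, s ∈ N. -/
set_option maxHeartbeats 1000000


/-!
Example: in `R = k[[X,Y]]` with `I = (X, Y²)` and `J = (X², Y)`, the pair `{X, Y}` is a joint
reduction of `(I, J)` of type `(1,1)` with joint reduction number zero:
`X·Iʳ·J^{s+1} + Y·I^{r+1}·Jˢ = I^{r+1}·J^{s+1}` for all `r, s ∈ ℕ`.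
-/

theorem joint_reduction_of_parameter_ideals_in_power_series_ring
    (k : Type*) [Field k]
    (I J : Ideal (MvPowerSeries (Fin 2) k))
    (hI : I = Ideal.span {MvPowerSeries.X 0, MvPowerSeries.X 1 ^ 2})
    (hJ : J = Ideal.span {MvPowerSeries.X 0 ^ 2, MvPowerSeries.X 1})
    (r s : ℕ) :
    Ideal.span {(MvPowerSeries.X 0 : MvPowerSeries (Fin 2) k)} * (I ^ r * J ^ (s + 1)) +
        Ideal.span {(MvPowerSeries.X 1 : MvPowerSeries (Fin 2) k)} * (I ^ (r + 1) * J ^ s) =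
      I ^ (r + 1) * J ^ (s + 1) := by
  subst hI hJ
  set x : MvPowerSeries (Fin 2) k := MvPowerSeries.X 0 with hx
  set y : MvPowerSeries (Fin 2) k := MvPowerSeries.X 1 with hy
  set I : Ideal (MvPowerSeries (Fin 2) k) := Ideal.span {x, y ^ 2} with hI
  set J : Ideal (MvPowerSeries (Fin 2) k) := Ideal.span {x ^ 2, y} with hJ
  have hxI : x ∈ I := Ideal.subset_span (by simp)
  have hy2I : y ^ 2 ∈ I := Ideal.subset_span (by simp)
  have hyJ : y ∈ J := Ideal.subset_span (by simp)
  have hx2J : x ^ 2 ∈ J := Ideal.subset_span (by simp)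
  have key : Ideal.span {x} * J + Ideal.span {y} * I = I * J := by
    apply le_antisymm
    · apply sup_le
      · exact Ideal.mul_mono ((Ideal.span_singleton_le_iff_mem I).2 hxI) le_rfl
      · rw [mul_comm I J]
        exact Ideal.mul_mono ((Ideal.span_singleton_le_iff_mem J).2 hyJ) le_rfl
    · rw [hI, hJ, Ideal.span_pair_mul_span_pair]
      rw [Ideal.span_le]
      rintro z hz
      simp only [Set.mem_insert_iff, Set.mem_singleton_iff] at hz
      rcases hz with rfl | rfl | rfl | rfl
      · exact Ideal.mem_sup_left
          (Ideal.mul_mem_mul (Ideal.mem_span_singleton_self x) hx2J)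
      · exact Ideal.mem_sup_left
          (Ideal.mul_mem_mul (Ideal.mem_span_singleton_self x) hyJ)
      · have h1 : y * x ^ 2 ∈ I := Ideal.mul_mem_left _ _ (Ideal.mul_mem_left _ _ hxI)
        have h2 : y * (y * x ^ 2) ∈ Ideal.span {y} * I :=
          Ideal.mul_mem_mul (Ideal.mem_span_singleton_self y) h1
        have heq : y ^ 2 * x ^ 2 = y * (y * x ^ 2) := by ring
        exact heq ▸ Ideal.mem_sup_right h2
      · have h2 : y * y ^ 2 ∈ Ideal.span {y} * I :=
          Ideal.mul_mem_mul (Ideal.mem_span_singleton_self y) hy2I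
        have heq : y ^ 2 * y = y * y ^ 2 := by ring
        exact heq ▸ Ideal.mem_sup_right h2
  calc Ideal.span {x} * (I ^ r * J ^ (s + 1)) + Ideal.span {y} * (I ^ (r + 1) * J ^ s)
      = (Ideal.span {x} * J + Ideal.span {y} * I) * (I ^ r * J ^ s) := by ring
    _ = (I * J) * (I ^ r * J ^ s) := by rw [key]
    _ = I ^ (r + 1) * J ^ (s + 1) := by ring
end

section
/- Let R = k[[X, Y]], I = (X, Y²), J = (X², Y). Then the parameter ideal (X³ + Y³, XY) is a reduction of IJ with reduction number at most 1: (X³ + Y³, XY)·IJ = I²J². -/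
/-!
Example: in `R = k[[X,Y]]` with `I = (X, Y²)` and `J = (X², Y)`, the parameter ideal
`(X³ + Y³, XY)` is a reduction of `IJ` with reduction number at most `1`:
`(X³ + Y³, XY)·(IJ) = (IJ)²`.
-/

theorem reduction_of_product_in_power_series_ring
    (k : Type*) [Field k]
    (I J : Ideal (MvPowerSeries (Fin 2) k))
    (hI : I = Ideal.span {MvPowerSeries.X 0, MvPowerSeries.X 1 ^ 2})
    (hJ : J = Ideal.span {MvPowerSeries.X 0 ^ 2, MvPowerSeries.X 1}) :
    Ideal.span {(MvPowerSeries.X 0 : MvPowerSeries (Fin 2) k) ^ 3 + MvPowerSeries.X 1 ^ 3,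
        MvPowerSeries.X 0 * MvPowerSeries.X 1} * (I * J) =
      (I * J) ^ 2 := by
  set x : MvPowerSeries (Fin 2) k := MvPowerSeries.X 0 with hx
  set y : MvPowerSeries (Fin 2) k := MvPowerSeries.X 1 with hy
  subst hI hJ
  -- IJ = span of four generators
  have hIJ : Ideal.span {x, y ^ 2} * Ideal.span {x ^ 2, y} =
      Ideal.span {x ^ 3, x * y, x ^ 2 * y ^ 2, y ^ 3} := by
    rw [Ideal.span_mul_span']
    apply le_antisymm
    · rw [Ideal.span_le]
      rintro z ⟨a, ha, b, hb, rfl⟩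
      simp only [Set.mem_insert_iff, Set.mem_singleton_iff] at ha hb
      rcases ha with rfl | rfl <;> rcases hb with rfl | rfl
      · exact Ideal.subset_span (by left; ring)
      · exact Ideal.subset_span (by right; left; ring)
      · exact Ideal.subset_span (by right; right; left; ring)
      · exact Ideal.subset_span (by right; right; right; exact Set.mem_singleton_iff.2 (by ring))
    · rw [Ideal.span_le]
      rintro z (rfl | rfl | rfl | rfl)
      · exact Ideal.subset_span ⟨x, by simp, x ^ 2, by simp, by ring⟩
      · exact Ideal.subset_span ⟨x, by simp, y, by simp, by ring⟩
      · exact Ideal.subset_span ⟨y ^ 2, by simp, x ^ 2, by simp, by ring⟩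
      · exact Ideal.subset_span ⟨y ^ 2, by simp, y, by simp, by ring⟩
  set S : Ideal (MvPowerSeries (Fin 2) k) :=
    Ideal.span {x ^ 3, x * y, x ^ 2 * y ^ 2, y ^ 3} with hS
  rw [hIJ, pow_two S]
  have hx3 : x ^ 3 ∈ S := Ideal.subset_span (by left; rfl)
  have hxy : x * y ∈ S := Ideal.subset_span (by right; left; rfl)
  have hx2y2 : x ^ 2 * y ^ 2 ∈ S := Ideal.subset_span (by right; right; left; rfl)
  have hy3 : y ^ 3 ∈ S := Ideal.subset_span (by right; right; right; rfl)
  set K : Ideal (MvPowerSeries (Fin 2) k) := Ideal.span {x ^ 3 + y ^ 3, x * y} with hK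
  have hK1 : x ^ 3 + y ^ 3 ∈ K := Ideal.subset_span (by left; rfl)
  have hK2 : x * y ∈ K := Ideal.subset_span (by right; rfl)
  apply le_antisymm
  · -- K * S ≤ S * S since K ≤ S
    apply Ideal.mul_mono_left
    rw [hK, Ideal.span_le]
    rintro z (rfl | rfl)
    · exact add_mem hx3 hy3
    · exact hxy
  · -- S * S ≤ K * S
    rw [hS, Ideal.span_mul_span']
    rw [Ideal.span_le]
    rintro z ⟨a, ha, b, hb, rfl⟩
    simp only [Set.mem_insert_iff, Set.mem_singleton_iff] at ha hb
    rcases ha with rfl | rfl | rfl | rfl <;> rcases hb with rfl | rfl | rfl | rfl <;> dsimp only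
    · -- x⁶ = (x³+y³)·x³ − (xy)·(x²y²)
      have h : x ^ 3 * x ^ 3 = (x ^ 3 + y ^ 3) * x ^ 3 - (x * y) * (x ^ 2 * y ^ 2) := by ring
      rw [h]
      exact sub_mem (Ideal.mul_mem_mul hK1 hx3) (Ideal.mul_mem_mul hK2 hx2y2)
    · have h : x ^ 3 * (x * y) = (x * y) * x ^ 3 := by ring
      rw [h]; exact Ideal.mul_mem_mul hK2 hx3
    · have h : x ^ 3 * (x ^ 2 * y ^ 2) = (x * y) * (x ^ 3 * (x * y)) := by ring
      rw [h]; exact Ideal.mul_mem_mul hK2 (Ideal.mul_mem_left _ _ hxy)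
    · have h : x ^ 3 * y ^ 3 = (x * y) * (x ^ 2 * y ^ 2) := by ring
      rw [h]; exact Ideal.mul_mem_mul hK2 hx2y2
    · exact Ideal.mul_mem_mul hK2 hx3
    · exact Ideal.mul_mem_mul hK2 hxy
    · exact Ideal.mul_mem_mul hK2 hx2y2
    · exact Ideal.mul_mem_mul hK2 hy3
    · have h : x ^ 2 * y ^ 2 * x ^ 3 = (x * y) * (x ^ 3 * (x * y)) := by ring
      rw [h]; exact Ideal.mul_mem_mul hK2 (Ideal.mul_mem_left _ _ hxy)
    · have h : x ^ 2 * y ^ 2 * (x * y) = (x * y) * (x ^ 2 * y ^ 2) := by ring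
      rw [h]; exact Ideal.mul_mem_mul hK2 hx2y2
    · have h : x ^ 2 * y ^ 2 * (x ^ 2 * y ^ 2) = (x * y) * (x ^ 2 * y ^ 2 * (x * y)) := by ring
      rw [h]; exact Ideal.mul_mem_mul hK2 (Ideal.mul_mem_right _ _ hx2y2)
    · have h : x ^ 2 * y ^ 2 * y ^ 3 = (x * y) * (y ^ 3 * (x * y)) := by ring
      rw [h]; exact Ideal.mul_mem_mul hK2 (Ideal.mul_mem_left _ _ hxy)
    · have h : y ^ 3 * x ^ 3 = (x * y) * (x ^ 2 * y ^ 2) := by ring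
      rw [h]; exact Ideal.mul_mem_mul hK2 hx2y2
    · have h : y ^ 3 * (x * y) = (x * y) * y ^ 3 := by ring
      rw [h]; exact Ideal.mul_mem_mul hK2 hy3
    · have h : y ^ 3 * (x ^ 2 * y ^ 2) = (x * y) * (y ^ 3 * (x * y)) := by ring
      rw [h]; exact Ideal.mul_mem_mul hK2 (Ideal.mul_mem_left _ _ hxy)
    · -- y⁶ = (x³+y³)·y³ − (xy)·(x²y²)
      have h : y ^ 3 * y ^ 3 = (x ^ 3 + y ^ 3) * y ^ 3 - (x * y) * (x ^ 2 * y ^ 2) := by ring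
      rw [h]
      exact sub_mem (Ideal.mul_mem_mul hK1 hy3) (Ideal.mul_mem_mul hK2 hx2y2)
end
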